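/- Let T be an integral domain, K a subring of T that is a field, and M a nonzero maximal ideal of T such that T = K + M (every element of T is the sum of an element of K and an element of M). Let k be a subfield of K and set R = k + M, a subring of T. If M contains an irreducible element of T, then R is a U-FFD if and only if T is a U-FFD and the quotient group K^×/k^× of the multiplicative group of nonzero elements of K by the subgroup of nonzero elements of k is finite. -/

import Mathlib

/-- The set of factorizations of `a`: multisets of atoms (irreducible elements), counted up
to associates, whose product is associated to `a`. -/
def FactorizationsOf {α : Type*} [CommMonoid α] (a : α) : Set (Multiset (Associates α)) :=
  {s | (∀ p ∈ s, Irreducible p) ∧ s.prod = Associates.mk a}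

/-- An element is atomic if it is a unit or a finite product of atoms; equivalently, some
finite multiset of atoms has product associated to it. -/
def IsAtomicElem {α : Type*} [CommMonoid α] (a : α) : Prop :=
  ∃ s : Multiset α, (∀ p ∈ s, Irreducible p) ∧ Associated s.prod a

/-- An integral domain is an unrestricted finite factorization domain (U-FFD) if every
nonzero atomic element has only finitely many factorizations. -/
def IsUFFD (R : Type*) [CommRing R] : Prop :=
  ∀ a : R, a ≠ 0 → IsAtomicElem a → (FactorizationsOf a).Finite

/-! Every `t ∈ T` lands in `R` after multiplication by a unit of `K`, and an element of `R`
outside `M` has a `k`-component invertible in `k`, so `R` is closed under division by such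
elements. Hence the units and atoms of `R` are those of `T` lying in `R`, and a factorization in
`T` of an element of `R` can be rebalanced by units of `K` into one in `R`: the factorizations of
`a ∈ R` map onto those of `a` in `T`. Above an atom of `T` outside `M` lies a single associate
class of `R`; above an atom `q ∈ M` lie the classes of the `u q`, `u ∈ Kˣ`, and `u q`, `v q` are
associated in `R` exactly when `u⁻¹ v ∈ k`. So the fibres are finite when `Kˣ/kˣ` is. Conversely,
for an atom `p ∈ M` the factorizations `(u p)(u⁻¹ p)` of `p²` in `R` realise every coset of `kˣ`,
and `p²` has only finitely many factorizations. -/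

def Associates.map {α β : Type*} [CommMonoid α] [CommMonoid β] (f : α →* β) :
    Associates α →* Associates β where
  toFun := Quotient.lift (fun a => Associates.mk (f a)) fun _ _ h =>
    Associates.mk_eq_mk_iff_associated.2 (h.map f)
  map_one' := by simp [← Associates.mk_one]
  map_mul' x y := by
    obtain ⟨a, rfl⟩ := Associates.mk_surjective x
    obtain ⟨b, rfl⟩ := Associates.mk_surjective y
    rw [Associates.mk_mul_mk]
    exact congrArg Associates.mk (map_mul f a b) |>.trans Associates.mk_mul_mk.symm

theorem Multiset.finite_preimage_map_singleton {α β : Type*} {f : α → β} {t : Multiset β}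
    (h : ∀ b ∈ t, (f ⁻¹' {b}).Finite) : (Multiset.map f ⁻¹' {t}).Finite := by
  classical
  induction t using Multiset.induction with
  | empty =>
    convert Set.finite_singleton (0 : Multiset α)
    ext s; simp
  | cons b t ih =>
    refine (((h b (Multiset.mem_cons_self b t)).prod
      (ih fun b' hb' => h b' (Multiset.mem_cons_of_mem hb'))).image
      fun p => p.1 ::ₘ p.2).subset ?_
    intro s hs
    obtain ⟨a, ha, rfl, ht⟩ := (Multiset.map_eq_cons f s t b).2 hs
    exact ⟨(a, s.erase a), ⟨rfl, ht⟩, Multiset.cons_erase ha⟩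

theorem QuotientGroup.finite_iff_finite_range {G X : Type*} [Group G] {H : Subgroup G}
    (g : G → X) (hg : ∀ u v, g u = g v ↔ u⁻¹ * v ∈ H) :
    Finite (G ⧸ H) ↔ (Set.range g).Finite := by
  let g' : G ⧸ H → X := Quotient.lift (s := QuotientGroup.leftRel H) g fun u v huv =>
    (hg u v).2 (QuotientGroup.leftRel_apply.1 huv)
  have hg' : Function.Injective g' := by
    rintro ⟨u⟩ ⟨v⟩ huv
    exact QuotientGroup.eq.2 ((hg u v).1 huv)
  rw [← Set.finite_range_iff hg', Set.range_quotient_lift (s := QuotientGroup.leftRel H)]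

theorem factorizationsOf_eq_of_associated {α : Type*} [CommMonoid α] {a b : α}
    (h : Associated a b) : FactorizationsOf a = FactorizationsOf b := by
  simp only [FactorizationsOf, Associates.mk_eq_mk_iff_associated.2 h]

theorem isAtomicElem_iff_nonempty_factorizationsOf {α : Type*} [CommMonoidWithZero α] {a : α} :
    IsAtomicElem a ↔ (FactorizationsOf a).Nonempty := by
  constructor
  · rintro ⟨s, hs, hsa⟩
    refine ⟨s.map Associates.mk, ?_, ?_⟩
    · simp only [Multiset.mem_map]
      rintro _ ⟨p, hp, rfl⟩
      exact Associates.irreducible_mk.2 (hs p hp)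
    · rw [Associates.prod_mk, Associates.mk_eq_mk_iff_associated]
      exact hsa
  · rintro ⟨s, hs, hsa⟩
    obtain ⟨s, rfl⟩ := Multiset.map_surjective_of_surjective Associates.mk_surjective s
    refine ⟨s, fun p hp => Associates.irreducible_mk.1 (hs _ (Multiset.mem_map_of_mem _ hp)),
      ?_⟩
    rwa [Associates.prod_mk, Associates.mk_eq_mk_iff_associated] at hsa

section Subring

variable {T : Type*} [CommRing T] {K k : Subring T}

theorem Subring.exists_units_coe_eq_of_isField (hK : IsField K) {a : T} (ha : a ∈ K)
    (ha0 : a ≠ 0) : ∃ u : Kˣ, (u : T) = a := by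
  let := hK.toField
  exact ⟨Units.mk0 ⟨a, ha⟩ fun h => ha0 (congrArg Subtype.val h), rfl⟩

theorem Subring.isUnit_coe_units (u : Kˣ) : IsUnit (u : T) := u.isUnit.map K.subtype

theorem Subring.coe_units_inv_mul (u : Kˣ) : ((u⁻¹ : Kˣ) : T) * u = 1 := by
  norm_cast; simp

theorem Subring.mem_range_unitsMap_inclusion_iff [Nontrivial T] (hkK : k ≤ K) (hk : IsField k)
    (u : Kˣ) : u ∈ (Units.map (Subring.inclusion hkK).toMonoidHom).range ↔ (u : T) ∈ k := by
  refine ⟨fun ⟨ω, hω⟩ => hω ▸ (ω : k).2, fun hu => ?_⟩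
  obtain ⟨ω, hω⟩ := k.exists_units_coe_eq_of_isField hk hu (K.isUnit_coe_units u).ne_zero
  exact ⟨ω, Units.ext (Subtype.ext hω)⟩

theorem eq_zero_of_mem_of_mem_ideal {M : Ideal T} (hK : IsField K) (hM : M ≠ ⊤) {a : T}
    (haK : a ∈ K) (haM : a ∈ M) : a = 0 := by
  by_contra ha0
  obtain ⟨u, rfl⟩ := K.exists_units_coe_eq_of_isField hK haK ha0
  exact hM (M.eq_top_of_isUnit_mem haM (K.isUnit_coe_units u))

end Subring

section DPlusM

variable {T : Type*} [CommRing T] {K k R : Subring T} {M : Ideal T}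
  (hR : ∀ x : T, x ∈ R ↔ ∃ a ∈ k, ∃ m ∈ M, x = a + m)
include hR

theorem mem_of_mem_ideal {m : T} (hm : m ∈ M) : m ∈ R :=
  (hR m).2 ⟨0, k.zero_mem, m, hm, (zero_add m).symm⟩

theorem mem_of_mem_subfield {a : T} (ha : a ∈ k) : a ∈ R :=
  (hR a).2 ⟨a, ha, 0, M.zero_mem, (add_zero a).symm⟩

theorem mem_subfield_of_mem_of_mem (hK : IsField K) (hM : M ≠ ⊤) (hkK : k ≤ K) {x : T}
    (hxR : x ∈ R) (hxK : x ∈ K) : x ∈ k := by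
  obtain ⟨a, ha, m, hm, rfl⟩ := (hR x).1 hxR
  have : m = 0 := eq_zero_of_mem_of_mem_ideal hK hM
    (by simpa using K.sub_mem hxK (hkK ha)) hm
  simpa [this] using ha

theorem mem_of_mul_mem (hk : IsField k) {a b : T} (ha : a ∈ R) (haM : a ∉ M)
    (hab : a * b ∈ R) : b ∈ R := by
  obtain ⟨e, he, m, hm, rfl⟩ := (hR a).1 ha
  obtain ⟨f, hf, m', hm', hf'⟩ := (hR _).1 hab
  have he0 : e ≠ 0 := by rintro rfl; exact haM (by simpa using hm)
  obtain ⟨ε, hε⟩ := k.exists_units_coe_eq_of_isField hk he he0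
  have hεe : ((ε⁻¹ : kˣ) : T) * e = 1 := hε ▸ k.coe_units_inv_mul ε
  refine (hR b).2 ⟨ε⁻¹ * f, k.mul_mem (ε⁻¹ : kˣ).1.2 hf, ε⁻¹ * (m' - m * b),
    M.mul_mem_left _ (M.sub_mem hm' (M.mul_mem_right b hm)), ?_⟩
  linear_combination ((ε⁻¹ : kˣ) : T) * hf' - b * hεe

theorem isUnit_of_isUnit_coe (hk : IsField k) (hM : M ≠ ⊤) {x : R} (hx : IsUnit (x : T)) :
    IsUnit x := by
  obtain ⟨y, hxy⟩ := isUnit_iff_exists_inv.1 hx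
  have hy : y ∈ R := mem_of_mul_mem hR hk x.2 (fun h => hM (M.eq_top_of_isUnit_mem h hx))
    (hxy ▸ R.one_mem)
  exact isUnit_iff_exists_inv.2 ⟨⟨y, hy⟩, Subtype.ext hxy⟩

theorem associated_of_associated_coe (hk : IsField k) (hM : M ≠ ⊤) {x y : R}
    (hxM : (x : T) ∉ M) (hxy : Associated (x : T) (y : T)) : Associated x y := by
  obtain ⟨w, hw⟩ := hxy
  have hwR : (w : T) ∈ R := mem_of_mul_mem hR hk x.2 hxM (hw ▸ y.2)
  obtain ⟨v, hv⟩ := isUnit_of_isUnit_coe (x := ⟨w, hwR⟩) hR hk hM w.isUnit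
  exact ⟨v, Subtype.ext (by simpa [hv] using hw)⟩

theorem exists_units_mul_mem (hK : IsField K)
    (hTKM : ∀ t : T, ∃ a ∈ K, ∃ m ∈ M, t = a + m) (y : T) :
    ∃ u : Kˣ, (u : T) * y ∈ R := by
  obtain ⟨a, ha, m, hm, rfl⟩ := hTKM y
  by_cases ha0 : a = 0
  · exact ⟨1, mem_of_mem_ideal hR (by simpa [ha0] using hm)⟩
  obtain ⟨u, rfl⟩ := K.exists_units_coe_eq_of_isField hK ha ha0
  refine ⟨u⁻¹, (hR _).2 ⟨1, k.one_mem, _, M.mul_mem_left ((u⁻¹ : Kˣ) : T) hm, ?_⟩⟩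
  linear_combination K.coe_units_inv_mul u

end DPlusM

structure IsDPlusM {T : Type*} [CommRing T] (K : Subring T) (M : Ideal T) (k R : Subring T) :
    Prop where
  isField_K : IsField K
  ne_top : M ≠ ⊤
  exists_add : ∀ t : T, ∃ a ∈ K, ∃ m ∈ M, t = a + m
  le : k ≤ K
  isField_k : IsField k
  mem_iff : ∀ x : T, x ∈ R ↔ ∃ a ∈ k, ∃ m ∈ M, x = a + m

namespace IsDPlusM

variable {T : Type*} [CommRing T] {K k R : Subring T} {M : Ideal T} (h : IsDPlusM K M k R)
include h

theorem exists_units_mul_mem_and_inv_mul_mem {y z : T} (hyz : y * z ∈ R) :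
    ∃ u : Kˣ, (u : T) * y ∈ R ∧ ((u⁻¹ : Kˣ) : T) * z ∈ R := by
  by_cases hyM : y ∈ M
  · obtain ⟨u, hu⟩ := exists_units_mul_mem h.mem_iff h.isField_K h.exists_add z
    exact ⟨u⁻¹, mem_of_mem_ideal h.mem_iff (M.mul_mem_left _ hyM), by simpa using hu⟩
  · obtain ⟨u, hu⟩ := exists_units_mul_mem h.mem_iff h.isField_K h.exists_add y
    refine ⟨u, hu, mem_of_mul_mem h.mem_iff h.isField_k hu (fun huy => hyM ?_) ?_⟩
    · simpa [← mul_assoc, Subring.coe_units_inv_mul] using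
        M.mul_mem_left ((u⁻¹ : Kˣ) : T) huy
    · have : (u : T) * y * (((u⁻¹ : Kˣ) : T) * z) = y * z := by
        linear_combination y * z * Subring.coe_units_inv_mul u
      rwa [this]

theorem irreducible_coe_iff {x : R} : Irreducible (x : T) ↔ Irreducible x := by
  have isUnit_of_coe : ∀ {y : R}, IsUnit (y : T) → IsUnit y :=
    isUnit_of_isUnit_coe h.mem_iff h.isField_k h.ne_top
  refine ⟨fun hx => ⟨fun hu => hx.not_isUnit (hu.map R.subtype), fun y z hyz => ?_⟩,
    fun hx => ⟨fun hu => hx.not_isUnit (isUnit_of_coe hu), fun y z hyz => ?_⟩⟩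
  · exact (hx.isUnit_or_isUnit (congrArg Subtype.val hyz)).imp isUnit_of_coe isUnit_of_coe
  · obtain ⟨u, huy, huz⟩ := h.exists_units_mul_mem_and_inv_mul_mem (hyz ▸ x.2)
    have hx_eq : x = ⟨_, huy⟩ * ⟨_, huz⟩ := Subtype.ext <| by
      change (x : T) = u * y * (((u⁻¹ : Kˣ) : T) * z)
      linear_combination hyz - y * z * Subring.coe_units_inv_mul u
    exact (hx.isUnit_or_isUnit hx_eq).imp
      (fun hu => isUnit_of_mul_isUnit_right (hu.map R.subtype))
      (fun hu => isUnit_of_mul_isUnit_right (hu.map R.subtype))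

theorem irreducible_map_iff {x : Associates R} :
    Irreducible (Associates.map R.subtype.toMonoidHom x) ↔ Irreducible x := by
  obtain ⟨r, rfl⟩ := Associates.mk_surjective x
  exact Associates.irreducible_mk.trans
    (h.irreducible_coe_iff.trans Associates.irreducible_mk.symm)

theorem map_mem_factorizationsOf {a : R} {s : Multiset (Associates R)}
    (hs : s ∈ FactorizationsOf a) :
    s.map (Associates.map R.subtype.toMonoidHom) ∈ FactorizationsOf (a : T) := by
  refine ⟨fun p hp => ?_, ?_⟩
  · obtain ⟨x, hx, rfl⟩ := Multiset.mem_map.1 hp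
    exact h.irreducible_map_iff.2 (hs.1 x hx)
  · rw [← map_multiset_prod, hs.2]
    rfl

theorem factorizationsOf_coe_subset (a : R) :
    FactorizationsOf (a : T) ⊆
      Multiset.map (Associates.map R.subtype.toMonoidHom) '' FactorizationsOf a := by
  intro s hs
  induction s using Multiset.induction generalizing a with
  | empty =>
    refine ⟨0, ⟨by simp, ?_⟩, rfl⟩
    have ha : IsUnit (a : T) := Associates.mk_eq_one.1 (by simpa using hs.2.symm)
    exact (Associates.mk_eq_one.2
      (isUnit_of_isUnit_coe h.mem_iff h.isField_k h.ne_top ha)).symm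
  | cons p s ih =>
    obtain ⟨y, rfl⟩ := Associates.mk_surjective p
    obtain ⟨z, hz⟩ := Associates.mk_surjective s.prod
    obtain ⟨w, hw⟩ : Associated (y * z) (a : T) := by
      rw [← Associates.mk_eq_mk_iff_associated, ← Associates.mk_mul_mk, hz, ← hs.2,
        Multiset.prod_cons]
    obtain ⟨u, huy, huz⟩ := h.exists_units_mul_mem_and_inv_mul_mem (y := y) (z := z * w)
      (by rw [← mul_assoc, hw]; exact a.2)
    have hs_prod : s.prod = Associates.mk (((u⁻¹ : Kˣ) : T) * (z * w)) := by
      rw [← hz, Associates.mk_eq_mk_iff_associated]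
      exact (associated_mul_unit_right z w w.isUnit).trans
        (associated_unit_mul_left (z * w) _ (K.isUnit_coe_units u⁻¹)).symm
    obtain ⟨s', hs', rfl⟩ :=
      ih ⟨_, huz⟩ ⟨fun p hp => hs.1 p (Multiset.mem_cons_of_mem hp), hs_prod⟩
    have hφ : Associates.map R.subtype.toMonoidHom (Associates.mk ⟨_, huy⟩) =
        Associates.mk y :=
      Associates.mk_eq_mk_iff_associated.2 (associated_unit_mul_left y _ (K.isUnit_coe_units u))
    refine ⟨Associates.mk ⟨_, huy⟩ ::ₘ s', ⟨?_, ?_⟩, by rw [Multiset.map_cons, hφ]⟩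
    · exact Multiset.forall_mem_cons.2
        ⟨h.irreducible_map_iff.1 (hφ ▸ hs.1 _ (Multiset.mem_cons_self _ _)), hs'.1⟩
    · rw [Multiset.prod_cons, hs'.2, Associates.mk_mul_mk]
      congr 1
      refine Subtype.ext ?_
      change (u : T) * y * (((u⁻¹ : Kˣ) : T) * (z * w)) = a
      linear_combination hw + y * z * w * Subring.coe_units_inv_mul u

theorem isUFFD_of_isUFFD_subring (hUR : IsUFFD R) : IsUFFD T := by
  intro t ht0 hatom
  obtain ⟨u, hu⟩ := exists_units_mul_mem h.mem_iff h.isField_K h.exists_add t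
  have hta : Associated t (u * t) := (associated_unit_mul_left t _ (K.isUnit_coe_units u)).symm
  have ha0 : (⟨_, hu⟩ : R) ≠ 0 := fun h0 => ht0 <| hta.eq_zero_iff.2 (congrArg Subtype.val h0)
  rw [isAtomicElem_iff_nonempty_factorizationsOf, factorizationsOf_eq_of_associated hta]
    at hatom
  rw [factorizationsOf_eq_of_associated hta]
  obtain ⟨s, hs, -⟩ := h.factorizationsOf_coe_subset ⟨_, hu⟩ hatom.some_mem
  exact ((hUR _ ha0 (isAtomicElem_iff_nonempty_factorizationsOf.2 ⟨s, hs⟩)).image _).subset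
    (h.factorizationsOf_coe_subset ⟨_, hu⟩)

def unitsMul {q : T} (hq : q ∈ M) (u : Kˣ) : R :=
  ⟨u * q, mem_of_mem_ideal h.mem_iff (M.mul_mem_left _ hq)⟩

theorem exists_associated_unitsMul {q : T} (hq : q ∈ M) {r : R} (hqr : Associated q (r : T)) :
    ∃ u : Kˣ, Associated (h.unitsMul hq u) r := by
  obtain ⟨w, hw⟩ := hqr
  obtain ⟨u, hu⟩ := exists_units_mul_mem h.mem_iff h.isField_K h.exists_add (w : T)
  obtain ⟨v, hv⟩ := isUnit_of_isUnit_coe (x := ⟨_, hu⟩) h.mem_iff h.isField_k h.ne_top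
    ((K.isUnit_coe_units u).mul w.isUnit)
  refine ⟨u⁻¹, v, Subtype.ext ?_⟩
  change ((u⁻¹ : Kˣ) : T) * q * (v : R) = r
  rw [hv, ← hw]
  linear_combination q * w * Subring.coe_units_inv_mul u

theorem irreducible_unitsMul {q : T} (hq : q ∈ M) (hirr : Irreducible q) (u : Kˣ) :
    Irreducible (h.unitsMul hq u) :=
  h.irreducible_coe_iff.1
    ((associated_unit_mul_left q _ (K.isUnit_coe_units u)).symm.irreducible hirr)

variable [IsDomain T]

theorem unitsMul_associated_iff {q : T} (hq : q ∈ M) (hq0 : q ≠ 0) (u v : Kˣ) :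
    Associated (h.unitsMul hq u) (h.unitsMul hq v) ↔
      u⁻¹ * v ∈ (Units.map (Subring.inclusion h.le).toMonoidHom).range := by
  rw [Subring.mem_range_unitsMap_inclusion_iff h.le h.isField_k]
  push_cast
  constructor
  · rintro ⟨w, hw⟩
    have hw' : (u : T) * q * (w : R) = v * q := congrArg Subtype.val hw
    have huw : (u : T) * (w : R) = v := mul_right_cancel₀ hq0 <| by
      linear_combination hw'
    have : ((u⁻¹ : Kˣ) : T) * v = (w : R) := by
      rw [← huw]; linear_combination (w : T) * Subring.coe_units_inv_mul u
    rw [this]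
    exact mem_subfield_of_mem_of_mem h.mem_iff h.isField_K h.ne_top h.le (w : R).2
      (this ▸ K.mul_mem (u⁻¹ : Kˣ).1.2 (v : K).2)
  · intro hk
    obtain ⟨ω, hω⟩ := isUnit_of_isUnit_coe (x := ⟨_, mem_of_mem_subfield h.mem_iff hk⟩)
      h.mem_iff h.isField_k h.ne_top ((K.isUnit_coe_units u⁻¹).mul (K.isUnit_coe_units v))
    refine ⟨ω, Subtype.ext ?_⟩
    change (u : T) * q * (ω : R) = v * q
    rw [hω]
    linear_combination (v : T) * q * Subring.coe_units_inv_mul u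

theorem finite_preimage_map_singleton
    (hfin : Finite (Kˣ ⧸ (Units.map (Subring.inclusion h.le).toMonoidHom).range))
    {b : Associates T} (hb : b ≠ 0) :
    (Associates.map R.subtype.toMonoidHom ⁻¹' {b}).Finite := by
  obtain ⟨q, rfl⟩ := Associates.mk_surjective b
  have hq0 : q ≠ 0 := Associates.mk_ne_zero.1 hb
  by_cases hq : q ∈ M
  · refine ((QuotientGroup.finite_iff_finite_range (fun u => Associates.mk (h.unitsMul hq u))
      fun u v => Associates.mk_eq_mk_iff_associated.trans
        (h.unitsMul_associated_iff hq hq0 u v)).1 hfin).subset ?_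
    rintro x hx
    obtain ⟨r, rfl⟩ := Associates.mk_surjective x
    obtain ⟨u, hu⟩ := h.exists_associated_unitsMul hq
      (Associates.mk_eq_mk_iff_associated.1 hx).symm
    exact ⟨u, Associates.mk_eq_mk_iff_associated.2 hu⟩
  · refine Set.Subsingleton.finite ?_
    rintro x hx y hy
    obtain ⟨r, rfl⟩ := Associates.mk_surjective x
    obtain ⟨s, rfl⟩ := Associates.mk_surjective y
    have hrq : Associated (r : T) q := Associates.mk_eq_mk_iff_associated.1 hx
    have hsq : Associated (s : T) q := Associates.mk_eq_mk_iff_associated.1 hy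
    exact Associates.mk_eq_mk_iff_associated.2 <| associated_of_associated_coe h.mem_iff
      h.isField_k h.ne_top (mt (Ideal.mem_iff_of_associated hrq).1 hq) (hrq.trans hsq.symm)

theorem isUFFD_subring_of_isUFFD (hUT : IsUFFD T)
    (hfin : Finite (Kˣ ⧸ (Units.map (Subring.inclusion h.le).toMonoidHom).range)) :
    IsUFFD R := by
  intro a ha0 hatom
  have haT0 : (a : T) ≠ 0 := by simpa using ha0
  obtain ⟨s, hs⟩ := isAtomicElem_iff_nonempty_factorizationsOf.1 hatom
  have hatomT := isAtomicElem_iff_nonempty_factorizationsOf.2 ⟨_, h.map_mem_factorizationsOf hs⟩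
  refine ((hUT _ haT0 hatomT).preimage' fun t ht => Multiset.finite_preimage_map_singleton
    fun b hb => h.finite_preimage_map_singleton hfin (ht.1 b hb).ne_zero).subset ?_
  exact fun s hs => h.map_mem_factorizationsOf hs

theorem finite_quotient_of_isUFFD_subring (hUR : IsUFFD R) {p : T} (hpM : p ∈ M)
    (hp : Irreducible p) :
    Finite (Kˣ ⧸ (Units.map (Subring.inclusion h.le).toMonoidHom).range) := by
  let g : Kˣ → Associates R := fun u => Associates.mk (h.unitsMul hpM u)
  let pR : R := ⟨p, mem_of_mem_ideal h.mem_iff hpM⟩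
  rw [QuotientGroup.finite_iff_finite_range g fun u v =>
    Associates.mk_eq_mk_iff_associated.trans (h.unitsMul_associated_iff hpM hp.ne_zero u v)]
  have hfac : ∀ u, g u ::ₘ {g u⁻¹} ∈ FactorizationsOf (pR * pR) := by
    refine fun u => ⟨?_, ?_⟩
    · simp only [Multiset.mem_cons, Multiset.mem_singleton]
      rintro _ (rfl | rfl) <;>
        exact Associates.irreducible_mk.2 (h.irreducible_unitsMul hpM hp _)
    · rw [Multiset.prod_cons, Multiset.prod_singleton, Associates.mk_mul_mk]
      congr 1
      refine Subtype.ext ?_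
      change (u : T) * p * (((u⁻¹ : Kˣ) : T) * p) = p * p
      linear_combination p * p * Subring.coe_units_inv_mul u
  have hpR0 : pR * pR ≠ 0 := by
    simpa [pR] using hp.ne_zero
  refine ((hUR _ hpR0 (isAtomicElem_iff_nonempty_factorizationsOf.2 ⟨_, hfac 1⟩)).biUnion
    fun s _ => s.finite_toSet).subset ?_
  rintro _ ⟨u, rfl⟩
  exact Set.mem_biUnion (hfac u) (Multiset.mem_cons_self (g u) {g u⁻¹})

end IsDPlusM

theorem uffd_DplusM_with_irreducible_general (T : Type*) [CommRing T] [IsDomain T]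
    (K : Subring T) (hK : IsField K)
    (M : Ideal T) (hMmax : M.IsMaximal)
    (hTKM : ∀ t : T, ∃ a ∈ K, ∃ m ∈ M, t = a + m)
    (k : Subring T) (hkK : k ≤ K) (hk : IsField k)
    (R : Subring T) (hR : ∀ x : T, x ∈ R ↔ ∃ a ∈ k, ∃ m ∈ M, x = a + m)
    (hirr : ∃ p ∈ M, Irreducible p) :
    IsUFFD R ↔
      IsUFFD T ∧
        Finite ((↥K)ˣ ⧸ (Units.map (Subring.inclusion hkK).toMonoidHom).range) := by
  have h : IsDPlusM K M k R := ⟨hK, hMmax.ne_top, hTKM, hkK, hk, hR⟩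
  obtain ⟨p, hpM, hp⟩ := hirr
  exact ⟨fun hUR => ⟨h.isUFFD_of_isUFFD_subring hUR,
    h.finite_quotient_of_isUFFD_subring hUR hpM hp⟩,
    fun ⟨hUT, hfin⟩ => h.isUFFD_subring_of_isUFFD hUT hfin⟩

/-- Let `T` be an integral domain, `K` a subring of `T` that is a field, and
`M` a nonzero maximal ideal of `T` such that `T = K + M`. Let `k` be a subfield of `K` and
let `R = k + M` (a subring of `T`). If `M` contains an irreducible element of `T`, then `R`
is a U-FFD if and only if `T` is a U-FFD and the group `K^×/k^×` is finite. -/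
theorem uffd_DplusM_with_irreducible (T : Type*) [CommRing T] [IsDomain T]
    (K : Subring T) (hK : IsField K)
    (M : Ideal T) (hMmax : M.IsMaximal) (hM0 : M ≠ ⊥)
    (hTKM : ∀ t : T, ∃ a ∈ K, ∃ m ∈ M, t = a + m)
    (k : Subring T) (hkK : k ≤ K) (hk : IsField k)
    (R : Subring T) (hR : ∀ x : T, x ∈ R ↔ ∃ a ∈ k, ∃ m ∈ M, x = a + m)
    (hirr : ∃ p ∈ M, Irreducible p) :
    IsUFFD R ↔
      IsUFFD T ∧
        Finite ((↥K)ˣ ⧸ (Units.map (Subring.inclusion hkK).toMonoidHom).range) :=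
  uffd_DplusM_with_irreducible_general T K hK M hMmax hTKM k hkK hk R hR hirr
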